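/- Critical points are exactly the fixed points of the GEORCE update: A feasible curve x, with velocities u_t := x_{t+1} − x_t, is a critical point of the discretized energy E (the gradient of E with respect to every interior point x_1, …, x_{T−1} vanishes) if and only if its GEORCE update satisfies ũ_t = u_t for all t = 0, …, T−1; equivalently, if and only if the updated curve x̃ (with step size α = 1) equals x. -/

import Mathlib

open Matrix

/-- Reinterpret a vector in `Fin d → ℝ` as a point of `EuclideanSpace ℝ (Fin d)`
(the two types are definitionally equal). -/
def toE (d : ℕ) (v : Fin d → ℝ) : EuclideanSpace ℝ (Fin d) := WithLp.toLp 2 v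

/-- The discretized energy functional. -/
noncomputable def energy (d T : ℕ)
    (G : EuclideanSpace ℝ (Fin d) → Matrix (Fin d) (Fin d) ℝ)
    (x : ℕ → EuclideanSpace ℝ (Fin d)) : ℝ :=
  ∑ t ∈ Finset.range T, (x (t + 1) - x t) ⬝ᵥ (G (x t)).mulVec (x (t + 1) - x t)

section GeorceAux

open InnerProductSpace

noncomputable section

variable {d : ℕ}

lemma georce_inner_eq_dot (v w : EuclideanSpace ℝ (Fin d)) : (inner ℝ v w : ℝ) = v ⬝ᵥ w := by
  simp [PiLp.inner_apply, RCLike.inner_apply, dotProduct, mul_comm]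

def mulVecCLM (M : Matrix (Fin d) (Fin d) ℝ) :
    EuclideanSpace ℝ (Fin d) →L[ℝ] EuclideanSpace ℝ (Fin d) :=
  LinearMap.toContinuousLinearMap <|
    ((EuclideanSpace.equiv (Fin d) ℝ).symm.toLinearEquiv.toLinearMap.comp
      M.mulVecLin).comp (EuclideanSpace.equiv (Fin d) ℝ).toLinearEquiv.toLinearMap

@[simp] lemma mulVecCLM_apply (M : Matrix (Fin d) (Fin d) ℝ) (v : EuclideanSpace ℝ (Fin d)) :
    mulVecCLM M v = toE d (M *ᵥ v) := by
  ext i; simp [mulVecCLM, toE]; rfl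

lemma hasGradientAt_inner_of {f g : EuclideanSpace ℝ (Fin d) → EuclideanSpace ℝ (Fin d)}
    {f' g' : EuclideanSpace ℝ (Fin d) →L[ℝ] EuclideanSpace ℝ (Fin d)}
    {p w : EuclideanSpace ℝ (Fin d)}
    (hf : HasFDerivAt f f' p) (hg : HasFDerivAt g g' p)
    (hw : ∀ h, (inner ℝ (f p) (g' h) : ℝ) + inner ℝ (f' h) (g p) = inner ℝ w h) :
    HasGradientAt (fun y => (inner ℝ (f y) (g y) : ℝ)) w p := by
  rw [hasGradientAt_iff_hasFDerivAt]
  refine (hf.inner ℝ hg).congr_fderiv ?_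
  ext h
  simp only [ContinuousLinearMap.comp_apply, ContinuousLinearMap.prod_apply,
    fderivInnerCLM_apply, toDual_apply_apply]
  exact (hw h).trans rfl

lemma gradA (M : Matrix (Fin d) (Fin d) ℝ) (hM : M.IsSymm) (c p : EuclideanSpace ℝ (Fin d)) :
    HasGradientAt (fun y : EuclideanSpace ℝ (Fin d) => (y - c) ⬝ᵥ M *ᵥ (y - c))
      ((2:ℝ) • toE d (M *ᵥ (p - c))) p := by
  have hf : HasFDerivAt (fun y : EuclideanSpace ℝ (Fin d) => y - c)
      (ContinuousLinearMap.id ℝ _) p := (hasFDerivAt_id p).sub_const c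
  have hg : HasFDerivAt (fun y : EuclideanSpace ℝ (Fin d) => mulVecCLM M (y - c))
      ((mulVecCLM M).comp (ContinuousLinearMap.id ℝ _)) p :=
    ((mulVecCLM M).hasFDerivAt).comp p hf
  have key := hasGradientAt_inner_of hf hg (w := (2:ℝ) • toE d (M *ᵥ (p - c))) ?_
  · convert key using 2 with y
    rw [mulVecCLM_apply, georce_inner_eq_dot]; simp [toE]
  · intro h
    simp only [ContinuousLinearMap.id_apply, ContinuousLinearMap.comp_apply, mulVecCLM_apply]
    rw [georce_inner_eq_dot, georce_inner_eq_dot, georce_inner_eq_dot]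
    show (p - c) ⬝ᵥ M *ᵥ h + h ⬝ᵥ M *ᵥ (p - c) = ((2:ℝ) • (M *ᵥ (p - c) : Fin d → ℝ)) ⬝ᵥ h
    rw [Matrix.dotProduct_mulVec, ← Matrix.mulVec_transpose, hM.eq, dotProduct_comm,
      smul_dotProduct, two_smul]
    simp [dotProduct_comm]

lemma diff_dot (G : EuclideanSpace ℝ (Fin d) → Matrix (Fin d) (Fin d) ℝ)
    (hG : ∀ i j, ContDiff ℝ (⊤ : ℕ∞) fun y => G y i j) (v w : Fin d → ℝ)
    (p : EuclideanSpace ℝ (Fin d)) :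
    DifferentiableAt ℝ (fun y => v ⬝ᵥ (G y) *ᵥ w) p := by
  simp only [dotProduct, Matrix.mulVec, dotProduct]
  apply DifferentiableAt.fun_sum
  intro i _
  apply DifferentiableAt.const_mul
  apply DifferentiableAt.fun_sum
  intro j _
  exact (((hG i j).differentiable (by simp)) p).mul_const _

lemma diff_mulVec_const (G : EuclideanSpace ℝ (Fin d) → Matrix (Fin d) (Fin d) ℝ)
    (hG : ∀ i j, ContDiff ℝ (⊤ : ℕ∞) fun y => G y i j) (v : Fin d → ℝ)
    (p : EuclideanSpace ℝ (Fin d)) :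
    DifferentiableAt ℝ (fun y => toE d ((G y) *ᵥ v)) p := by
  have h0 : DifferentiableAt ℝ (fun y : EuclideanSpace ℝ (Fin d) => (G y) *ᵥ v) p := by
    apply differentiableAt_pi.2
    intro i
    simp only [Matrix.mulVec, dotProduct]
    apply DifferentiableAt.fun_sum
    intro j _
    exact (((hG i j).differentiable (by simp)) p).mul_const _
  exact ((EuclideanSpace.equiv (Fin d) ℝ).symm.differentiable.differentiableAt).comp p h0

lemma hasFDerivAt_mulVec_sub (G : EuclideanSpace ℝ (Fin d) → Matrix (Fin d) (Fin d) ℝ)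
    (hG : ∀ i j, ContDiff ℝ (⊤ : ℕ∞) fun y => G y i j) (p : EuclideanSpace ℝ (Fin d)) :
    HasFDerivAt (fun y => toE d ((G y) *ᵥ (y - p))) (mulVecCLM (G p)) p := by
  have h0 : HasFDerivAt (fun y : EuclideanSpace ℝ (Fin d) => (G y) *ᵥ (y - p))
      ((EuclideanSpace.equiv (Fin d) ℝ).toContinuousLinearMap.comp (mulVecCLM (G p))) p := by
    apply hasFDerivAt_pi''
    intro i
    have hψ : ∀ j : Fin d, HasFDerivAt (fun y : EuclideanSpace ℝ (Fin d) => (y - p) j)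
        ((EuclideanSpace.proj j : EuclideanSpace ℝ (Fin d) →L[ℝ] ℝ)) p := by
      intro j
      have h1 := ((EuclideanSpace.proj (𝕜 := ℝ) (ι := Fin d) j).hasFDerivAt (x := p)).sub_const (p j)
      exact h1
    have hj := fun j : Fin d =>
      ((((hG i j).differentiable (by simp)) p).hasFDerivAt.mul' (hψ j))
    have hsum := HasFDerivAt.fun_sum (u := Finset.univ) (fun j (_ : j ∈ Finset.univ) => hj j)
    have heq : (fun y : EuclideanSpace ℝ (Fin d) => ((G y) *ᵥ (y - p)) i)
        = fun y => ∑ j, G y i j * (y - p) j := rfl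
    rw [heq]
    refine hsum.congr_fderiv ?_
    ext h
    simp only [ContinuousLinearMap.sum_apply, ContinuousLinearMap.add_apply,
      ContinuousLinearMap.smul_apply, ContinuousLinearMap.smulRight_apply, PiLp.sub_apply,
      sub_self, smul_eq_mul, mul_zero, add_zero]
    simp [toE, Matrix.mulVec, dotProduct]
  have h1 := ((EuclideanSpace.equiv (Fin d) ℝ).symm.toContinuousLinearMap.hasFDerivAt
      (x := (G p) *ᵥ (p - p))).comp p h0
  exact h1.congr_fderiv (by ext v i; simp)

lemma gradB1 (G : EuclideanSpace ℝ (Fin d) → Matrix (Fin d) (Fin d) ℝ)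
    (hG : ∀ i j, ContDiff ℝ (⊤ : ℕ∞) fun y => G y i j) (hGsym : ∀ y, (G y).IsSymm)
    (u : Fin d → ℝ) (p : EuclideanSpace ℝ (Fin d)) :
    HasGradientAt (fun y : EuclideanSpace ℝ (Fin d) => u ⬝ᵥ (G y) *ᵥ (y - p))
      (toE d ((G p) *ᵥ u)) p := by
  have hf : HasFDerivAt (fun _ : EuclideanSpace ℝ (Fin d) => toE d u)
      (0 : EuclideanSpace ℝ (Fin d) →L[ℝ] EuclideanSpace ℝ (Fin d)) p := hasFDerivAt_const _ _
  have hg := hasFDerivAt_mulVec_sub G hG p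
  have key := hasGradientAt_inner_of hf hg (w := toE d ((G p) *ᵥ u)) ?_
  · convert key using 2 with y
    rw [georce_inner_eq_dot]; simp [toE]
  · intro h
    simp only [ContinuousLinearMap.zero_apply, mulVecCLM_apply]
    rw [georce_inner_eq_dot, georce_inner_eq_dot, georce_inner_eq_dot]
    show u ⬝ᵥ (G p *ᵥ h) + (0 : Fin d → ℝ) ⬝ᵥ (G p *ᵥ (p - p)) = (G p *ᵥ u) ⬝ᵥ h
    rw [zero_dotProduct, add_zero, Matrix.dotProduct_mulVec, ← Matrix.mulVec_transpose,
      (hGsym p).eq]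

lemma gradB2 (G : EuclideanSpace ℝ (Fin d) → Matrix (Fin d) (Fin d) ℝ)
    (hG : ∀ i j, ContDiff ℝ (⊤ : ℕ∞) fun y => G y i j)
    (u : Fin d → ℝ) (p : EuclideanSpace ℝ (Fin d)) :
    HasGradientAt (fun y : EuclideanSpace ℝ (Fin d) => (y - p) ⬝ᵥ (G y) *ᵥ u)
      (toE d ((G p) *ᵥ u)) p := by
  have hf : HasFDerivAt (fun y : EuclideanSpace ℝ (Fin d) => y - p)
      (ContinuousLinearMap.id ℝ _) p := (hasFDerivAt_id p).sub_const p
  have hg := (diff_mulVec_const G hG u p).hasFDerivAt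
  have key := hasGradientAt_inner_of hf hg (w := toE d ((G p) *ᵥ u)) ?_
  · convert key using 2 with y
    rw [georce_inner_eq_dot]; simp [toE]
  · intro h
    rw [sub_self p, inner_zero_left, zero_add, ContinuousLinearMap.id_apply, georce_inner_eq_dot,
      georce_inner_eq_dot]
    exact dotProduct_comm _ _

lemma gradB3 (G : EuclideanSpace ℝ (Fin d) → Matrix (Fin d) (Fin d) ℝ)
    (hG : ∀ i j, ContDiff ℝ (⊤ : ℕ∞) fun y => G y i j) (p : EuclideanSpace ℝ (Fin d)) :
    HasGradientAt (fun y : EuclideanSpace ℝ (Fin d) => (y - p) ⬝ᵥ (G y) *ᵥ (y - p))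
      (0 : EuclideanSpace ℝ (Fin d)) p := by
  have hf : HasFDerivAt (fun y : EuclideanSpace ℝ (Fin d) => y - p)
      (ContinuousLinearMap.id ℝ _) p := (hasFDerivAt_id p).sub_const p
  have hg := hasFDerivAt_mulVec_sub G hG p
  have key := hasGradientAt_inner_of hf hg (w := (0 : EuclideanSpace ℝ (Fin d))) ?_
  · convert key using 2 with y
    rw [georce_inner_eq_dot]; simp [toE]
  · intro h
    have h2 : toE d ((G p) *ᵥ (p.ofLp - p.ofLp))
        = (0 : EuclideanSpace ℝ (Fin d)) := by
      rw [sub_self]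
      simp [toE, Matrix.mulVec_zero]
    rw [h2, inner_zero_right, sub_self p, inner_zero_left, inner_zero_left]
    norm_num

lemma HasGradientAt.add'' {f g : EuclideanSpace ℝ (Fin d) → ℝ} {wf wg p : EuclideanSpace ℝ (Fin d)}
    (hf : HasGradientAt f wf p) (hg : HasGradientAt g wg p) :
    HasGradientAt (fun y => f y + g y) (wf + wg) p := by
  rw [hasGradientAt_iff_hasFDerivAt] at hf hg ⊢
  refine (hf.add hg).congr_fderiv ?_
  ext h
  simp [toDual_apply_apply, inner_add_left]

lemma HasGradientAt.sub'' {f g : EuclideanSpace ℝ (Fin d) → ℝ} {wf wg p : EuclideanSpace ℝ (Fin d)}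
    (hf : HasGradientAt f wf p) (hg : HasGradientAt g wg p) :
    HasGradientAt (fun y => f y - g y) (wf - wg) p := by
  rw [hasGradientAt_iff_hasFDerivAt] at hf hg ⊢
  refine (hf.sub hg).congr_fderiv ?_
  ext h
  simp [toDual_apply_apply, inner_sub_left]

lemma HasGradientAt.const_add'' {f : EuclideanSpace ℝ (Fin d) → ℝ} {wf p : EuclideanSpace ℝ (Fin d)}
    (K : ℝ) (hf : HasGradientAt f wf p) :
    HasGradientAt (fun y => K + f y) wf p := by
  rw [hasGradientAt_iff_hasFDerivAt] at hf ⊢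
  refine ((hasFDerivAt_const K p).add hf).congr_fderiv ?_
  ext h
  simp [toDual_apply_apply]

lemma dot_expand (M : Matrix (Fin d) (Fin d) ℝ) (a c : Fin d → ℝ) :
    ((a - c) ⬝ᵥ M *ᵥ (a - c) : ℝ)
      = ((a ⬝ᵥ M *ᵥ a - a ⬝ᵥ M *ᵥ c) - c ⬝ᵥ M *ᵥ a) + c ⬝ᵥ M *ᵥ c := by
  simp only [sub_dotProduct, dotProduct_sub, Matrix.mulVec_sub]
  ring

lemma grad_energy (T : ℕ) (G : EuclideanSpace ℝ (Fin d) → Matrix (Fin d) (Fin d) ℝ)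
    (hG : ∀ i j, ContDiff ℝ (⊤ : ℕ∞) fun y => G y i j) (hGsym : ∀ y, (G y).IsSymm)
    (x : ℕ → EuclideanSpace ℝ (Fin d)) (u : ℕ → EuclideanSpace ℝ (Fin d))
    (hu : ∀ s, u s = x (s + 1) - x s) (t : ℕ) (ht1 : 1 ≤ t) (ht2 : t < T) :
    HasGradientAt (fun y => energy d T G (Function.update x t y))
      ((2:ℝ) • toE d ((G (x (t-1))) *ᵥ (u (t-1)))
        + ((gradient (fun y => u t ⬝ᵥ (G y).mulVec (u t)) (x t))
          - (2:ℝ) • toE d ((G (x t)) *ᵥ (u t)))) (x t) := by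
  set p := x t with hp
  have htm : t - 1 + 1 = t := Nat.succ_pred_eq_of_pos ht1
  set K : ℝ := ∑ s ∈ ((Finset.range T).erase (t-1)).erase t,
      (x (s + 1) - x s) ⬝ᵥ (G (x s)).mulVec (x (s + 1) - x s) with hK
  have hfeq : (fun y => energy d T G (Function.update x t y))
      = fun y : EuclideanSpace ℝ (Fin d) => (K + (y - x (t-1)) ⬝ᵥ (G (x (t-1))) *ᵥ (y - x (t-1)))
        + (x (t+1) - y) ⬝ᵥ (G y) *ᵥ (x (t+1) - y) := by
    funext y
    unfold energy
    have hm1 : t - 1 ∈ Finset.range T := Finset.mem_range.2 (lt_of_le_of_lt (Nat.sub_le t 1) ht2)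
    have hm2 : t ∈ (Finset.range T).erase (t - 1) := by
      refine Finset.mem_erase.2 ⟨?_, Finset.mem_range.2 ht2⟩
      omega
    rw [← Finset.add_sum_erase _ _ hm1, ← Finset.add_sum_erase _ _ hm2]
    have e1 : Function.update x t y (t - 1) = x (t - 1) := Function.update_of_ne (by omega) _ _
    have e2 : Function.update x t y (t - 1 + 1) = y := by rw [htm]; exact Function.update_self _ _ _
    have e3 : Function.update x t y (t + 1) = x (t + 1) := Function.update_of_ne (by omega) _ _
    have e4 : Function.update x t y t = y := Function.update_self _ _ _
    rw [e1, e2, e3, e4]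
    have e5 : ∑ s ∈ ((Finset.range T).erase (t-1)).erase t,
        (Function.update x t y (s + 1) - Function.update x t y s) ⬝ᵥ
          (G (Function.update x t y s)).mulVec
            (Function.update x t y (s + 1) - Function.update x t y s) = K := by
      apply Finset.sum_congr rfl
      intro s hs
      have hs1 : s ≠ t := (Finset.mem_erase.1 hs).1
      have hs2 : s ≠ t - 1 := (Finset.mem_erase.1 (Finset.mem_erase.1 hs).2).1
      have f1 : Function.update x t y s = x s := Function.update_of_ne hs1 _ _
      have f2 : Function.update x t y (s + 1) = x (s + 1) :=
        Function.update_of_ne (by omega) _ _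
      rw [f1, f2]
    rw [e5]
    ring
  rw [hfeq]
  have hA := gradA (G (x (t-1))) (hGsym _) (x (t-1)) p
  have hq1 := (diff_dot G hG (u t) (u t) p).hasGradientAt
  have hq2a := gradB1 G hG hGsym (u t) p
  have hq2b := gradB2 G hG (u t) p
  have hq3 := gradB3 G hG p
  have hB : HasGradientAt
      (fun y : EuclideanSpace ℝ (Fin d) => (x (t+1) - y) ⬝ᵥ (G y) *ᵥ (x (t+1) - y))
      ((gradient (fun y => u t ⬝ᵥ (G y).mulVec (u t)) p - toE d ((G p) *ᵥ (u t))
        - toE d ((G p) *ᵥ (u t))) + 0) p := by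
    have hcomb := ((hq1.sub'' hq2a).sub'' hq2b).add'' hq3
    have hBE : (fun y : EuclideanSpace ℝ (Fin d) =>
        (((u t ⬝ᵥ (G y).mulVec (u t)) - (u t ⬝ᵥ (G y) *ᵥ (y - p))) - ((y - p) ⬝ᵥ (G y) *ᵥ (u t)))
          + ((y - p) ⬝ᵥ (G y) *ᵥ (y - p)))
        = fun y : EuclideanSpace ℝ (Fin d) => (x (t+1) - y) ⬝ᵥ (G y) *ᵥ (x (t+1) - y) := by
      funext y
      rw [hu t, hp]
      simp only [WithLp.ofLp_sub, sub_dotProduct, dotProduct_sub, Matrix.mulVec_sub]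
      ring
    rw [← hBE]
    exact hcomb
  have htot := (hA.const_add'' K).add'' hB
  convert htot using 1
  have hum : (u (t-1) : EuclideanSpace ℝ (Fin d)) = p - x (t-1) := by
    rw [hu (t-1), htm, hp]
  rw [hum, WithLp.ofLp_sub]
  rw [two_smul, two_smul]
  abel

def Wv (d : ℕ) (G : EuclideanSpace ℝ (Fin d) → Matrix (Fin d) (Fin d) ℝ)
    (x u utilde : ℕ → EuclideanSpace ℝ (Fin d)) (s : ℕ) : EuclideanSpace ℝ (Fin d) :=
  (2:ℝ) • toE d ((G (x s)) *ᵥ (u s)) - (2:ℝ) • toE d ((G (x s)) *ᵥ (utilde s))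

lemma Wv_dot (G : EuclideanSpace ℝ (Fin d) → Matrix (Fin d) (Fin d) ℝ)
    (x u utilde : ℕ → EuclideanSpace ℝ (Fin d)) (s : ℕ) :
    (u s - utilde s) ⬝ᵥ (Wv d G x u utilde s : EuclideanSpace ℝ (Fin d))
      = 2 * ((u s - utilde s) ⬝ᵥ (G (x s)) *ᵥ (u s - utilde s)) := by
  simp only [Wv, toE, WithLp.ofLp_sub, WithLp.ofLp_smul, WithLp.ofLp_toLp, Matrix.mulVec_sub,
    dotProduct_sub, dotProduct_smul, smul_eq_mul]
  ring

end

end GeorceAux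

open InnerProductSpace in
/-- Critical points of the discretized energy are exactly the fixed points of the
GEORCE update: the gradient of `E` with respect to every interior point vanishes
iff the GEORCE update satisfies `ũ_t = u_t` for all `t`, equivalently iff the
updated curve `x̃` equals `x`. -/
theorem georce_critical_iff_fixed_point
    (d T : ℕ) (hd : 1 ≤ d) (hT : 2 ≤ T)
    (a b : EuclideanSpace ℝ (Fin d))
    (G : EuclideanSpace ℝ (Fin d) → Matrix (Fin d) (Fin d) ℝ)
    (hGsmooth : ∀ i j, ContDiff ℝ (⊤ : ℕ∞) fun y => G y i j)
    (hGsym : ∀ y, (G y).IsSymm)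
    (hGpos : ∀ y, (G y).PosDef)
    (x : ℕ → EuclideanSpace ℝ (Fin d))
    (hx0 : x 0 = a) (hxT : x T = b)
    (u : ℕ → EuclideanSpace ℝ (Fin d)) (hu : ∀ t, u t = x (t + 1) - x t)
    (utilde μ : ℕ → EuclideanSpace ℝ (Fin d))
    (hsys1 : ∀ t < T, (2 : ℝ) • toE d ((G (x t)).mulVec (utilde t)) + μ t = 0)
    (hsys2 : ∀ t, 1 ≤ t → t ≤ T - 1 →
      gradient (fun y => u t ⬝ᵥ (G y).mulVec (u t)) (x t) + μ t = μ (t - 1))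
    (hsys3 : ∑ t ∈ Finset.range T, utilde t = b - a)
    (xtilde : ℕ → EuclideanSpace ℝ (Fin d))
    (hxtilde0 : xtilde 0 = a)
    (hxtilde : ∀ t < T, xtilde (t + 1) = xtilde t + utilde t) :
    ((∀ t, 1 ≤ t → t ≤ T - 1 →
        gradient (fun y => energy d T G (Function.update x t y)) (x t) = 0) ↔
      (∀ t < T, utilde t = u t)) ∧
    ((∀ t, 1 ≤ t → t ≤ T - 1 →
        gradient (fun y => energy d T G (Function.update x t y)) (x t) = 0) ↔
      (∀ t ≤ T, xtilde t = x t)) := by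
  have hμ : ∀ s, s < T → μ s = -((2:ℝ) • toE d ((G (x s)).mulVec (utilde s))) := by
    intro s hs
    exact (eq_neg_of_add_eq_zero_right (hsys1 s hs))
  have hgrad : ∀ t, 1 ≤ t → t ≤ T - 1 →
      gradient (fun y => energy d T G (Function.update x t y)) (x t)
        = Wv d G x u utilde (t-1) - Wv d G x u utilde t := by
    intro t ht1 ht2
    have htT : t < T := by omega
    have hge := (grad_energy T G hGsmooth hGsym x u hu t ht1 htT).gradient
    have hν : gradient (fun y => u t ⬝ᵥ (G y).mulVec (u t)) (x t) = μ (t-1) - μ t :=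
      eq_sub_of_add_eq (hsys2 t ht1 ht2)
    rw [hge, hν, hμ (t-1) (by omega), hμ t htT]
    simp only [Wv]
    abel
  have hiff1 : (∀ t, 1 ≤ t → t ≤ T - 1 →
      gradient (fun y => energy d T G (Function.update x t y)) (x t) = 0) ↔
      (∀ t < T, utilde t = u t) := by
    constructor
    · intro hcrit
      have hW : ∀ s, s < T → Wv d G x u utilde s = Wv d G x u utilde 0 := by
        intro s
        induction s with
        | zero => intro _; rfl
        | succ n ih =>
          intro hn
          have h1 : Wv d G x u utilde (n+1-1) - Wv d G x u utilde (n+1) = 0 := by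
            rw [← hgrad (n+1) (by omega) (by omega)]
            exact hcrit (n+1) (by omega) (by omega)
          have h2 : Wv d G x u utilde (n+1) = Wv d G x u utilde n := by
            have h3 := sub_eq_zero.1 h1
            simpa using h3.symm
          rw [h2]
          exact ih (by omega)
      have hsumu : ∑ s ∈ Finset.range T, u s = b - a := by
        have h1 : ∑ s ∈ Finset.range T, u s = ∑ s ∈ Finset.range T, (x (s+1) - x s) :=
          Finset.sum_congr rfl (fun s _ => hu s)
        rw [h1, Finset.sum_range_sub, hxT, hx0]
      have hv : ∑ s ∈ Finset.range T, (u s - utilde s) = (0 : EuclideanSpace ℝ (Fin d)) := by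
        rw [Finset.sum_sub_distrib, hsumu, hsys3, sub_self]
      have hvi : ∀ i : Fin d, ∑ s ∈ Finset.range T, (u s - utilde s) i = 0 := by
        intro i
        have h := map_sum (EuclideanSpace.proj (𝕜 := ℝ) i)
          (fun s => u s - utilde s) (Finset.range T)
        rw [hv] at h
        simpa using h.symm
      have hsum0 : ∑ s ∈ Finset.range T,
          ((u s - utilde s) ⬝ᵥ (Wv d G x u utilde 0 : EuclideanSpace ℝ (Fin d))) = 0 := by
        simp only [dotProduct]
        rw [Finset.sum_comm]
        apply Finset.sum_eq_zero
        intro i _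
        rw [← Finset.sum_mul, hvi i, zero_mul]
      have hterm : ∀ s ∈ Finset.range T,
          ((u s - utilde s) ⬝ᵥ (Wv d G x u utilde 0 : EuclideanSpace ℝ (Fin d)))
            = 2 * ((u s - utilde s) ⬝ᵥ (G (x s)) *ᵥ (u s - utilde s)) := by
        intro s hs
        rw [← hW s (Finset.mem_range.1 hs), Wv_dot]
      rw [Finset.sum_congr rfl hterm] at hsum0
      have hnn : ∀ s ∈ Finset.range T,
          0 ≤ 2 * ((u s - utilde s) ⬝ᵥ (G (x s)) *ᵥ (u s - utilde s)) := by
        intro s _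
        have h := (hGpos (x s)).posSemidef.dotProduct_mulVec_nonneg (u s - utilde s)
        simp only [star_trivial, WithLp.ofLp_sub] at h ⊢
        linarith
      have hz := (Finset.sum_eq_zero_iff_of_nonneg hnn).1 hsum0
      intro t htT
      by_contra hne
      have hvne : (u t - utilde t) ≠ (0 : EuclideanSpace ℝ (Fin d)) :=
        sub_ne_zero.2 (fun hh => hne hh.symm)
      have hpos := (hGpos (x t)).dotProduct_mulVec_pos (x := (u t - utilde t).ofLp)
        (by rwa [Ne, WithLp.ofLp_eq_zero])
      rw [star_trivial] at hpos
      have hz' := hz t (Finset.mem_range.2 htT)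
      simp only [WithLp.ofLp_sub] at hpos hz'
      linarith
    · intro hfix t ht1 ht2
      rw [hgrad t ht1 ht2]
      have hW0 : ∀ s, s < T → Wv d G x u utilde s = 0 := by
        intro s hs
        simp only [Wv, hfix s hs]
        exact sub_self _
      rw [hW0 (t-1) (by omega), hW0 t (by omega), sub_zero]
  have hiff2 : (∀ t < T, utilde t = u t) ↔ (∀ t ≤ T, xtilde t = x t) := by
    constructor
    · intro hfix t
      induction t with
      | zero => intro _; rw [hxtilde0, hx0]
      | succ n ih =>
        intro hn
        have hnT : n < T := by omega
        rw [hxtilde n hnT, ih (by omega), hfix n hnT, hu n]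
        abel
    · intro hfx t htT
      have h1 := hfx t (le_of_lt htT)
      have h2 := hfx (t+1) htT
      have h3 := hxtilde t htT
      rw [h1, h2] at h3
      rw [hu t]
      refine eq_sub_of_add_eq ?_
      rw [add_comm]
      exact h3.symm
  exact ⟨hiff1, hiff1.trans hiff2⟩
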